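/- arXiv:2604.14909 — 5 statements merged into one kernel-verified Lean document; each statement's English description precedes it below -/
import Mathlib

section
/- Let δ, d, m be natural numbers with d ≥ 1, F an additive commutative monoid, and q_1, …, q_m ∈ ℤ^d. For each dimension k ∈ {1, …, d}, let 𝒞_k be an admissible merging of the family of intervals {[q_{j,k} − δ, q_{j,k} + δ]}_{j ∈ [m]}, let v_k : 𝒞_k → F be any assignment of values to the merged intervals, and define H_k : ℤ → F by H_k(x) = v_k(C) when x lies in the (unique) member C of 𝒞_k containing x, and H_k(x) = 0 when x lies in no member. Define H : ℤ^d → F by H(x) = ∑_{k=1}^{d} H_k(x_k). Then for every j ∈ [m] and every w ∈ ℤ^d with |w_k − q_{j,k}| ≤ δ for all k, it holds that H(w) = H(q_j). -/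
/-- A finset of integers is an integer interval `[a, b]`. -/
def IsIntIntervalFinset (s : Finset ℤ) : Prop :=
  ∃ a b : ℤ, a ≤ b ∧ s = Finset.Icc a b

/-- `C` is an admissible merging of the finite family `I` of nonempty finite integer
intervals: a finite family of pairwise disjoint nonempty finite integer intervals whose
union equals `⋃ j, I j`, such that every `I j` is contained in some member of `C`. -/
def IsAdmissibleMerging {J : Type*} [Fintype J] (I : J → Finset ℤ)
    (C : Finset (Finset ℤ)) : Prop :=
  (∀ c ∈ C, IsIntIntervalFinset c ∧ c.Nonempty) ∧
  (C : Set (Finset ℤ)).PairwiseDisjoint id ∧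
  C.biUnion id = Finset.univ.biUnion I ∧
  ∀ j : J, ∃ c ∈ C, I j ⊆ c

/-- **The local mapping is constant on radius-`δ` `L_∞` balls.** For each dimension
`k`, let `𝒞 k` be an admissible merging of the radius-`δ` intervals around the `k`-th
coordinates of `q 1, …, q m`, let `v k` assign values to the merged intervals, and let
`H k x` equal `v k C` when `x` lies in the member `C` of `𝒞 k` containing it, and `0`
when `x` lies in no member. Then `H(x) := ∑ k, H k (x k)` satisfies `H(w) = H(q j)`
whenever `|w k − q j k| ≤ δ` in every dimension `k`. -/
theorem localMap_constant_on_ball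
    {δ d m : ℕ} (hd : 1 ≤ d) {F : Type*} [AddCommMonoid F]
    (q : Fin m → Fin d → ℤ)
    (𝒞 : Fin d → Finset (Finset ℤ))
    (h𝒞 : ∀ k : Fin d,
      IsAdmissibleMerging (fun j => Finset.Icc (q j k - δ) (q j k + δ)) (𝒞 k))
    (v : Fin d → Finset ℤ → F)
    (H : Fin d → ℤ → F)
    (hHmem : ∀ (k : Fin d) (x : ℤ), ∀ C ∈ 𝒞 k, x ∈ C → H k x = v k C)
    (hHzero : ∀ (k : Fin d) (x : ℤ), (∀ C ∈ 𝒞 k, x ∉ C) → H k x = 0) :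
    ∀ (j : Fin m) (w : Fin d → ℤ), (∀ k, |w k - q j k| ≤ (δ : ℤ)) →
      ∑ k : Fin d, H k (w k) = ∑ k : Fin d, H k (q j k) := by
  intro j w hw
  refine Finset.sum_congr rfl fun k _ => ?_
  obtain ⟨c, hcC, hsub⟩ := (h𝒞 k).2.2.2 j
  have hwmem : w k ∈ Finset.Icc (q j k - (δ:ℤ)) (q j k + δ) := by
    rw [Finset.mem_Icc]
    have := abs_le.mp (hw k)
    omega
  have hqmem : q j k ∈ Finset.Icc (q j k - (δ:ℤ)) (q j k + δ) := by
    rw [Finset.mem_Icc]; omega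
  rw [hHmem k (w k) c hcC (hsub hwmem), hHmem k (q j k) c hcC (hsub hqmem)]
end

section
/- Let a ≤ b be naturals and let M be the family of dyadic intervals D(c, k) that are contained in the integer interval [a, b] and are maximal under set inclusion among all dyadic intervals contained in [a, b]. Then M is finite, its members are pairwise disjoint, their union equals [a, b], and for every D ∈ M, every dyadic interval D' with D ⊊ D' satisfies D' ⊄ [a, b]. -/
/-!
Membership `x ∈ D(c, k)` just says `x / 2^k = c`, so two dyadic intervals that meet are nested.
Hence distinct maximal dyadic subintervals of a finite set `S` are disjoint, and every `x ∈ S`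
lies in one of them: enlarge the singleton `D(x, 0)` within the finite family of dyadic
subintervals of `S`.
-/

/-- The dyadic interval `D(c, k) = {c·2^k, c·2^k + 1, …, (c+1)·2^k − 1}`. -/
def dyadic (c k : ℕ) : Finset ℕ :=
  Finset.Ico (c * 2 ^ k) ((c + 1) * 2 ^ k)

def IsDyadic (D : Finset ℕ) : Prop :=
  ∃ c k, D = dyadic c k

theorem mem_dyadic {x c k : ℕ} : x ∈ dyadic c k ↔ x / 2 ^ k = c := by
  have := Nat.two_pow_pos k
  rw [dyadic, Finset.mem_Ico, Nat.div_eq_iff this, add_one_mul]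
  omega

theorem dyadic_subset_dyadic_of_le {x c c' k k' : ℕ} (hk : k ≤ k')
    (hx : x ∈ dyadic c k) (hx' : x ∈ dyadic c' k') : dyadic c k ⊆ dyadic c' k' := by
  intro y hy
  rw [mem_dyadic] at hx hx' hy ⊢
  obtain ⟨j, rfl⟩ := Nat.exists_eq_add_of_le hk
  rw [pow_add, ← Nat.div_div_eq_div_mul, hy, ← hx, Nat.div_div_eq_div_mul, ← pow_add, hx']

theorem IsDyadic.subset_or_subset_of_not_disjoint {D D' : Finset ℕ} (hD : IsDyadic D)
    (hD' : IsDyadic D') (h : ¬Disjoint D D') : D ⊆ D' ∨ D' ⊆ D := by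
  obtain ⟨⟨c, k, rfl⟩, ⟨c', k', rfl⟩⟩ := And.intro hD hD'
  obtain ⟨x, hx, hx'⟩ := Finset.not_disjoint_iff.1 h
  rcases le_total k k' with hk | hk
  · exact .inl (dyadic_subset_dyadic_of_le hk hx hx')
  · exact .inr (dyadic_subset_dyadic_of_le hk hx' hx)

def maximalDyadics (S : Finset ℕ) : Set (Finset ℕ) :=
  {D | Maximal (fun D => IsDyadic D ∧ D ⊆ S) D}

section MaximalDyadics

variable {S D : Finset ℕ}

theorem mem_maximalDyadics : D ∈ maximalDyadics S ↔ Maximal (fun D => IsDyadic D ∧ D ⊆ S) D :=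
  Iff.rfl

theorem subset_of_mem_maximalDyadics (hD : D ∈ maximalDyadics S) : D ⊆ S :=
  (mem_maximalDyadics.1 hD).prop.2

theorem finite_setOf_isDyadic_and_subset (S : Finset ℕ) :
    {D | IsDyadic D ∧ D ⊆ S}.Finite :=
  S.powerset.finite_toSet.subset fun _ hD => Finset.mem_powerset.2 hD.2

theorem finite_maximalDyadics : (maximalDyadics S).Finite :=
  (finite_setOf_isDyadic_and_subset S).subset fun _ hD => (mem_maximalDyadics.1 hD).prop

theorem pairwiseDisjoint_maximalDyadics : (maximalDyadics S).PairwiseDisjoint id := by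
  intro D hD D' hD' hne
  rw [mem_maximalDyadics] at hD hD'
  by_contra h
  rcases hD.prop.1.subset_or_subset_of_not_disjoint hD'.prop.1 h with hsub | hsub
  · exact hne (hD.eq_of_le hD'.prop hsub)
  · exact hne (hD'.eq_of_le hD.prop hsub).symm

theorem exists_mem_maximalDyadics {x : ℕ} (hx : x ∈ S) : ∃ D ∈ maximalDyadics S, x ∈ D := by
  have hsingleton : IsDyadic {x} ∧ {x} ⊆ S :=
    ⟨⟨x, 0, by simp [dyadic]⟩, Finset.singleton_subset_iff.2 hx⟩
  obtain ⟨D, hxD, hD⟩ := (finite_setOf_isDyadic_and_subset S).exists_le_maximal hsingleton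
  exact ⟨D, hD, Finset.singleton_subset_iff.1 hxD⟩

end MaximalDyadics

theorem maximal_dyadic_decomposition_general (a b : ℕ)
    (M : Set (Finset ℕ))
    (hM : M = {D | (∃ c k, D = dyadic c k) ∧ D ⊆ Finset.Icc a b ∧
      ∀ D' : Finset ℕ, (∃ c k, D' = dyadic c k) → D' ⊆ Finset.Icc a b →
        D ⊆ D' → D = D'}) :
    M.Finite ∧
    M.PairwiseDisjoint id ∧
    (∀ x : ℕ, (∃ D ∈ M, x ∈ D) ↔ x ∈ Finset.Icc a b) ∧
    (∀ D ∈ M, ∀ D' : Finset ℕ, (∃ c k, D' = dyadic c k) → D ⊂ D' →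
      ¬ D' ⊆ Finset.Icc a b) := by
  obtain rfl : M = maximalDyadics (Finset.Icc a b) := by
    ext D
    simp only [hM, mem_maximalDyadics, maximal_iff, and_imp, and_assoc, IsDyadic]
    rfl
  refine ⟨finite_maximalDyadics, pairwiseDisjoint_maximalDyadics, fun x => ?_, ?_⟩
  · exact ⟨fun ⟨_, hD, hxD⟩ => subset_of_mem_maximalDyadics hD hxD, exists_mem_maximalDyadics⟩
  · exact fun D hD D' hD' hlt hD'S => (mem_maximalDyadics.1 hD).not_prop_of_gt hlt ⟨hD', hD'S⟩

/-- **Canonical dyadic decomposition of an interval.** The family `M` of dyadic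
intervals that are contained in `[a, b]` and maximal under inclusion among all dyadic
intervals contained in `[a, b]` is finite, consists of pairwise disjoint sets, covers
exactly `[a, b]`, and no strictly larger dyadic interval over a member of `M` is
contained in `[a, b]`. -/
theorem maximal_dyadic_decomposition (a b : ℕ) (hab : a ≤ b)
    (M : Set (Finset ℕ))
    (hM : M = {D | (∃ c k, D = dyadic c k) ∧ D ⊆ Finset.Icc a b ∧
      ∀ D' : Finset ℕ, (∃ c k, D' = dyadic c k) → D' ⊆ Finset.Icc a b →
        D ⊆ D' → D = D'}) :
    M.Finite ∧
    M.PairwiseDisjoint id ∧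
    (∀ x : ℕ, (∃ D ∈ M, x ∈ D) ↔ x ∈ Finset.Icc a b) ∧
    (∀ D ∈ M, ∀ D' : Finset ℕ, (∃ c k, D' = dyadic c k) → D ⊂ D' →
      ¬ D' ⊆ Finset.Icc a b) :=
  maximal_dyadic_decomposition_general a b M hM
end

section
/- Let t be a natural number, set δ = 2^t, and let a be a natural number with a ≥ δ. Then the integer interval [a − δ, a + δ] (which has cardinality 2δ + 1) can be partitioned into at most t + 2 = log₂ δ + 2 pairwise disjoint dyadic intervals, each of cardinality at most 2^{t+1} = 2δ. -/
namespace PrefixDecomp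

/-- `D` is a pairwise-disjoint family of dyadic blocks covering exactly `s`. -/
def Covers (D : Finset (ℕ × ℕ)) (s : Finset ℕ) : Prop :=
  ((D : Set (ℕ × ℕ)).PairwiseDisjoint fun p => dyadic p.1 p.2) ∧
    D.biUnion (fun p => dyadic p.1 p.2) = s

lemma covers_single (c k : ℕ) : Covers {(c, k)} (dyadic c k) := by
  constructor
  · simp [Set.PairwiseDisjoint, Set.Pairwise]
  · simp

lemma dyadic_subset_of_covers {D : Finset (ℕ × ℕ)} {s : Finset ℕ} (h : Covers D s)
    {p : ℕ × ℕ} (hp : p ∈ D) : dyadic p.1 p.2 ⊆ s := by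
  rw [← h.2]; exact Finset.subset_biUnion_of_mem (fun p => dyadic p.1 p.2) hp

lemma covers_union {A B : Finset (ℕ × ℕ)} {sa sb : Finset ℕ}
    (hA : Covers A sa) (hB : Covers B sb) (hdisj : Disjoint sa sb) :
    Covers (A ∪ B) (sa ∪ sb) := by
  constructor
  · intro p hp q hq hpq
    simp only [Finset.coe_union, Set.mem_union, Finset.mem_coe] at hp hq
    rcases hp with hp | hp <;> rcases hq with hq | hq
    · exact hA.1 hp hq hpq
    · exact Disjoint.mono (dyadic_subset_of_covers hA hp) (dyadic_subset_of_covers hB hq) hdisj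
    · exact Disjoint.mono (dyadic_subset_of_covers hB hp) (dyadic_subset_of_covers hA hq) hdisj.symm
    · exact hB.1 hp hq hpq
  · ext n
    simp only [Finset.mem_biUnion, Finset.mem_union, ← hA.2, ← hB.2]
    constructor
    · rintro ⟨p, hp | hp, hn⟩
      · exact Or.inl ⟨p, hp, hn⟩
      · exact Or.inr ⟨p, hp, hn⟩
    · rintro (⟨p, hp, hn⟩ | ⟨p, hp, hn⟩)
      · exact ⟨p, Or.inl hp, hn⟩
      · exact ⟨p, Or.inr hp, hn⟩

lemma mem_dyadic_succ {n c k : ℕ} : n ∈ dyadic c (k + 1) ↔ n / 2 ∈ dyadic c k := by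
  simp only [dyadic, Finset.mem_Ico]
  rw [Nat.le_div_iff_mul_le two_pos, Nat.div_lt_iff_lt_mul two_pos,
    pow_succ, ← mul_assoc, ← mul_assoc]

lemma mem_Ico_two {n x y : ℕ} :
    n ∈ Finset.Ico (2 * x) (2 * y) ↔ n / 2 ∈ Finset.Ico x y := by
  simp only [Finset.mem_Ico]
  rw [Nat.le_div_iff_mul_le two_pos, Nat.div_lt_iff_lt_mul two_pos,
    mul_comm x 2, mul_comm y 2]

lemma covers_scale {D : Finset (ℕ × ℕ)} {x y : ℕ} (h : Covers D (Finset.Ico x y)) :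
    Covers (D.image fun p => (p.1, p.2 + 1)) (Finset.Ico (2 * x) (2 * y)) := by
  have hinj : Function.Injective (fun p : ℕ × ℕ => (p.1, p.2 + 1)) := by
    intro p q hpq
    simp only [Prod.mk.injEq] at hpq
    exact Prod.ext hpq.1 (Nat.succ_injective hpq.2)
  constructor
  · intro p' hp' q' hq' hne
    simp only [Finset.coe_image, Set.mem_image, Finset.mem_coe] at hp' hq'
    obtain ⟨p, hp, rfl⟩ := hp'
    obtain ⟨q, hq, rfl⟩ := hq'
    have hpq : p ≠ q := fun h' => hne (by rw [h'])
    have := h.1 hp hq hpq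
    simp only [Function.onFun, Finset.disjoint_left] at this ⊢
    intro n hn hn'
    exact this (mem_dyadic_succ.mp hn) (mem_dyadic_succ.mp hn')
  · ext n
    simp only [Finset.mem_biUnion, Finset.mem_image]
    constructor
    · rintro ⟨p', ⟨p, hp, rfl⟩, hn⟩
      rw [mem_Ico_two]
      rw [← h.2]
      exact Finset.mem_biUnion.mpr ⟨p, hp, mem_dyadic_succ.mp hn⟩
    · intro hn
      rw [mem_Ico_two, ← h.2, Finset.mem_biUnion] at hn
      obtain ⟨p, hp, hn⟩ := hn
      exact ⟨(p.1, p.2 + 1), ⟨p, hp, rfl⟩, mem_dyadic_succ.mpr hn⟩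

lemma dyadic_zero (c : ℕ) : dyadic c 0 = Finset.Ico c (c + 1) := by
  simp [dyadic]

/-- Decompose an arbitrary interval of length `2^m - 1` into at most `m` blocks
of level at most `m`. -/
lemma lemF : ∀ m x : ℕ, ∃ D : Finset (ℕ × ℕ),
    D.card ≤ m ∧ Covers D (Finset.Ico x (x + (2 ^ m - 1))) ∧ ∀ p ∈ D, p.2 ≤ m := by
  intro m
  induction m with
  | zero =>
    intro x
    refine ⟨∅, by simp, ?_, by simp⟩
    constructor
    · simp [Set.PairwiseDisjoint, Set.Pairwise]
    · simp
  | succ m ih =>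
    intro x
    rcases Nat.even_or_odd x with ⟨x', hx⟩ | ⟨x', hx⟩
    · -- x = 2x' even; peel the last element
      obtain ⟨D, hcard, hcov, hlev⟩ := ih x'
      have h2 : (2:ℕ) ^ (m+1) - 1 = (2 ^ m - 1) + 2 ^ m := by
        have : (1:ℕ) ≤ 2 ^ m := Nat.one_le_two_pow
        omega
      refine ⟨(D.image fun p => (p.1, p.2 + 1)) ∪ {(x + (2 ^ (m+1) - 1) - 1, 0)}, ?_, ?_, ?_⟩
      · calc _ ≤ (D.image fun p => (p.1, p.2 + 1)).card + 1 := by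
              apply le_trans (Finset.card_union_le _ _); simp
          _ ≤ D.card + 1 := Nat.add_le_add_right Finset.card_image_le 1
          _ ≤ m + 1 := by omega
      · have hsc := covers_scale hcov
        have hx2 : 2 * x' = x := by omega
        have hend : 2 * (x' + (2 ^ m - 1)) = x + (2 ^ (m+1) - 1) - 1 := by
          have : (1:ℕ) ≤ 2 ^ m := Nat.one_le_two_pow
          have : (2:ℕ) ^ (m+1) = 2 * 2 ^ m := by ring
          omega
        rw [hx2, hend] at hsc
        have hsing := covers_single (x + (2 ^ (m+1) - 1) - 1) 0
        rw [dyadic_zero] at hsing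
        have h1 : (1:ℕ) ≤ 2 ^ (m+1) := Nat.one_le_two_pow
        have heq : x + (2 ^ (m+1) - 1) - 1 + 1 = x + (2 ^ (m+1) - 1) := by omega
        rw [heq] at hsing
        have h := covers_union hsc hsing (Finset.Ico_disjoint_Ico_consecutive _ _ _)
        rwa [Finset.Ico_union_Ico_eq_Ico (by omega) (by omega)] at h
      · intro p hp
        rcases Finset.mem_union.mp hp with hp | hp
        · obtain ⟨q, hq, rfl⟩ := Finset.mem_image.mp hp
          exact Nat.succ_le_succ (hlev q hq)
        · simp only [Finset.mem_singleton] at hp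
          subst hp; simp
    · -- x = 2x' + 1 odd; peel the first element
      obtain ⟨D, hcard, hcov, hlev⟩ := ih (x' + 1)
      refine ⟨{(x, 0)} ∪ (D.image fun p => (p.1, p.2 + 1)), ?_, ?_, ?_⟩
      · calc _ ≤ 1 + (D.image fun p => (p.1, p.2 + 1)).card := by
              apply le_trans (Finset.card_union_le _ _); simp
          _ ≤ 1 + D.card := Nat.add_le_add_left Finset.card_image_le 1
          _ ≤ m + 1 := by omega
      · have hsc := covers_scale hcov
        have hx2 : 2 * (x' + 1) = x + 1 := by omega
        have hend : 2 * (x' + 1 + (2 ^ m - 1)) = x + (2 ^ (m+1) - 1) := by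
          have : (1:ℕ) ≤ 2 ^ m := Nat.one_le_two_pow
          have : (2:ℕ) ^ (m+1) = 2 * 2 ^ m := by ring
          omega
        rw [hx2, hend] at hsc
        have hsing := covers_single x 0
        rw [dyadic_zero] at hsing
        have h1 : (1:ℕ) ≤ 2 ^ (m+1) := Nat.one_le_two_pow
        have h := covers_union hsing hsc (Finset.Ico_disjoint_Ico_consecutive _ _ _)
        rwa [Finset.Ico_union_Ico_eq_Ico (by omega) (by omega)] at h
      · intro p hp
        rcases Finset.mem_union.mp hp with hp | hp
        · simp only [Finset.mem_singleton] at hp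
          subst hp; simp
        · obtain ⟨q, hq, rfl⟩ := Finset.mem_image.mp hp
          exact Nat.succ_le_succ (hlev q hq)

/-- Decompose an arbitrary interval of length `2^m` into at most `m + 1` blocks
of level at most `m`. -/
lemma lemD : ∀ m x : ℕ, ∃ D : Finset (ℕ × ℕ),
    D.card ≤ m + 1 ∧ Covers D (Finset.Ico x (x + 2 ^ m)) ∧ ∀ p ∈ D, p.2 ≤ m := by
  intro m
  induction m with
  | zero =>
    intro x
    refine ⟨{(x, 0)}, by simp, ?_, by simp⟩
    have h := covers_single x 0
    rw [dyadic_zero] at h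
    simpa using h
  | succ m ih =>
    intro x
    rcases Nat.even_or_odd x with ⟨x', hx⟩ | ⟨x', hx⟩
    · -- x even: pure scaling
      obtain ⟨D, hcard, hcov, hlev⟩ := ih x'
      have hsc := covers_scale hcov
      have hx2 : 2 * x' = x := by omega
      have hend : 2 * (x' + 2 ^ m) = x + 2 ^ (m+1) := by
        have : (2:ℕ) ^ (m+1) = 2 * 2 ^ m := by ring
        omega
      rw [hx2, hend] at hsc
      refine ⟨D.image fun p => (p.1, p.2 + 1), ?_, hsc, ?_⟩
      · exact le_trans Finset.card_image_le (by omega)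
      · intro p hp
        obtain ⟨q, hq, rfl⟩ := Finset.mem_image.mp hp
        exact Nat.succ_le_succ (hlev q hq)
    · -- x odd: peel {x} and the last element, middle has length 2^{m+1} - 2
      obtain ⟨D, hcard, hcov, hlev⟩ := lemF m (x' + 1)
      have hsc := covers_scale hcov
      have hx2 : 2 * (x' + 1) = x + 1 := by omega
      have h1 : (1:ℕ) ≤ 2 ^ m := Nat.one_le_two_pow
      have h2 : (2:ℕ) ^ (m+1) = 2 * 2 ^ m := by ring
      have hend : 2 * (x' + 1 + (2 ^ m - 1)) = x + 2 ^ (m+1) - 1 := by omega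
      rw [hx2, hend] at hsc
      have hsingL := covers_single x 0
      rw [dyadic_zero] at hsingL
      have hsingR := covers_single (x + 2 ^ (m+1) - 1) 0
      rw [dyadic_zero] at hsingR
      have heq : x + 2 ^ (m+1) - 1 + 1 = x + 2 ^ (m+1) := by omega
      rw [heq] at hsingR
      have hmid := covers_union hsingL hsc (Finset.Ico_disjoint_Ico_consecutive _ _ _)
      rw [Finset.Ico_union_Ico_eq_Ico (by omega) (by omega)] at hmid
      have hall := covers_union hmid hsingR (Finset.Ico_disjoint_Ico_consecutive _ _ _)
      rw [Finset.Ico_union_Ico_eq_Ico (by omega) (by omega)] at hall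
      refine ⟨{(x, 0)} ∪ (D.image fun p => (p.1, p.2 + 1)) ∪ {(x + 2 ^ (m+1) - 1, 0)},
        ?_, hall, ?_⟩
      · calc _ ≤ ({(x, 0)} ∪ (D.image fun p => (p.1, p.2 + 1)) : Finset (ℕ × ℕ)).card + 1 := by
              apply le_trans (Finset.card_union_le _ _); simp
          _ ≤ 1 + (D.image fun p => (p.1, p.2 + 1)).card + 1 := by
              have := Finset.card_union_le ({(x, 0)} : Finset (ℕ × ℕ))
                (D.image fun p => (p.1, p.2 + 1))
              simp only [Finset.card_singleton] at this
              omega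
          _ ≤ 1 + D.card + 1 :=
              Nat.add_le_add_right (Nat.add_le_add_left Finset.card_image_le 1) 1
          _ ≤ m + 2 := by omega
      · intro p hp
        rcases Finset.mem_union.mp hp with hp | hp
        · rcases Finset.mem_union.mp hp with hp | hp
          · simp only [Finset.mem_singleton] at hp; subst hp; simp
          · obtain ⟨q, hq, rfl⟩ := Finset.mem_image.mp hp
            exact Nat.succ_le_succ (hlev q hq)
        · simp only [Finset.mem_singleton] at hp; subst hp; simp

lemma dyadic_card (c k : ℕ) : (dyadic c k).card = 2 ^ k := by
  simp [dyadic, Nat.card_Ico, add_mul]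

end PrefixDecomp

open PrefixDecomp in
/-- **Prefix decomposition of a radius-`δ` interval for `δ = 2^t`.** The interval
`[a − δ, a + δ]` (of cardinality `2δ + 1`) can be partitioned into at most
`t + 2 = log₂ δ + 2` pairwise disjoint dyadic intervals, each of cardinality at most
`2^(t+1) = 2δ`. -/
theorem interval_decompose_prefixes (t : ℕ) (δ : ℕ) (hδ : δ = 2 ^ t)
    (a : ℕ) (ha : δ ≤ a) :
    ∃ 𝒟 : Finset (ℕ × ℕ),
      𝒟.card ≤ t + 2 ∧
      ((𝒟 : Set (ℕ × ℕ)).PairwiseDisjoint fun p => dyadic p.1 p.2) ∧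
      Finset.Icc (a - δ) (a + δ) = 𝒟.biUnion (fun p => dyadic p.1 p.2) ∧
      ∀ p ∈ 𝒟, (dyadic p.1 p.2).card ≤ 2 ^ (t + 1) := by
  subst hδ
  set L := a - 2 ^ t with hL
  have hpt : (2:ℕ) ^ (t+1) = 2 * 2 ^ t := by ring
  have hIcc : Finset.Icc (a - 2 ^ t) (a + 2 ^ t) = Finset.Ico L (L + (2 ^ (t+1) + 1)) := by
    have h1 : L + (2 ^ (t+1) + 1) = (a + 2 ^ t) + 1 := by omega
    rw [h1, Finset.Ico_add_one_right_eq_Icc]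
  rcases Nat.even_or_odd L with ⟨L', hLe⟩ | ⟨L', hLo⟩
  · -- L even: scaled D(t, L') on [L, L + 2^(t+1)) plus last singleton
    obtain ⟨D, hcard, hcov, hlev⟩ := lemD t L'
    have hsc := covers_scale hcov
    have hx2 : 2 * L' = L := by omega
    have hend : 2 * (L' + 2 ^ t) = L + 2 ^ (t+1) := by omega
    rw [hx2, hend] at hsc
    have hsing := covers_single (L + 2 ^ (t+1)) 0
    rw [dyadic_zero] at hsing
    have hall := covers_union hsc hsing (Finset.Ico_disjoint_Ico_consecutive _ _ _)
    rw [Finset.Ico_union_Ico_eq_Ico (by omega) (by omega)] at hall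
    refine ⟨(D.image fun p => (p.1, p.2 + 1)) ∪ {(L + 2 ^ (t+1), 0)}, ?_, hall.1, ?_, ?_⟩
    · calc _ ≤ (D.image fun p => (p.1, p.2 + 1)).card + 1 := by
            apply le_trans (Finset.card_union_le _ _); simp
        _ ≤ D.card + 1 := Nat.add_le_add_right Finset.card_image_le 1
        _ ≤ t + 2 := by omega
    · rw [hIcc, show L + (2 ^ (t+1) + 1) = L + 2 ^ (t+1) + 1 from by omega, ← hall.2]
    · intro p hp
      rw [dyadic_card]
      rcases Finset.mem_union.mp hp with hp | hp
      · obtain ⟨q, hq, rfl⟩ := Finset.mem_image.mp hp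
        exact Nat.pow_le_pow_right (by norm_num) (Nat.succ_le_succ (hlev q hq))
      · simp only [Finset.mem_singleton] at hp; subst hp
        exact Nat.one_le_two_pow
  · -- L odd: first singleton plus scaled D(t, L'+1) on [L+1, L+1+2^(t+1))
    obtain ⟨D, hcard, hcov, hlev⟩ := lemD t (L' + 1)
    have hsc := covers_scale hcov
    have hx2 : 2 * (L' + 1) = L + 1 := by omega
    have hend : 2 * (L' + 1 + 2 ^ t) = L + (2 ^ (t+1) + 1) := by omega
    rw [hx2, hend] at hsc
    have hsing := covers_single L 0
    rw [dyadic_zero] at hsing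
    have hall := covers_union hsing hsc (Finset.Ico_disjoint_Ico_consecutive _ _ _)
    rw [Finset.Ico_union_Ico_eq_Ico (by omega) (by omega)] at hall
    refine ⟨{(L, 0)} ∪ (D.image fun p => (p.1, p.2 + 1)), ?_, hall.1, ?_, ?_⟩
    · calc _ ≤ 1 + (D.image fun p => (p.1, p.2 + 1)).card := by
            apply le_trans (Finset.card_union_le _ _); simp
        _ ≤ 1 + D.card := Nat.add_le_add_left Finset.card_image_le 1
        _ ≤ t + 2 := by omega
    · rw [hIcc, hall.2]
    · intro p hp
      rw [dyadic_card]
      rcases Finset.mem_union.mp hp with hp | hp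
      · simp only [Finset.mem_singleton] at hp; subst hp
        exact Nat.one_le_two_pow
      · obtain ⟨q, hq, rfl⟩ := Finset.mem_image.mp hp
        exact Nat.pow_le_pow_right (by norm_num) (Nat.succ_le_succ (hlev q hq))
end

section
/- Let R be an additive commutative group, E a type with decidable equality, and h ≥ 1 a natural number. Suppose we are given e_i^S, e_i^R ∈ E and v_i^S, v_i^R ∈ R for i ∈ [h], together with values satisfying: (i) b_i^S, b_i^R ∈ ZMod 2 with b_i^S + b_i^R = 1 if e_i^S = e_i^R and b_i^S + b_i^R = 0 otherwise; (ii) t_i^S, t_i^R ∈ R with t_i^S + t_i^R = v_i^S + v_i^R if b_i^S + b_i^R = 1 and t_i^S + t_i^R = 0 otherwise; (iii) b^S = ∑_i b_i^S, b^R = ∑_i b_i^R (in ZMod 2), t^S = ∑_i t_i^S, t^R = ∑_i t_i^R; (iv) arbitrary r^S, r^R ∈ R, and m^S, m^R ∈ R with m^S + m^R = (t^S − r^S) + (t^R − r^R) if b^S + b^R = 1 and m^S + m^R = 0 otherwise; (v) z^S = m^S + r^S and z^R = m^R + r^R. Then: if there is exactly one index i* ∈ [h] with e_{i*}^S = e_{i*}^R,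 it holds that z^S + z^R = v_{i*}^S + v_{i*}^R; and if there is no index i with e_i^S = e_i^R, it holds that z^S + z^R = r^S + r^R. -/
/-!
Writing `c i` for the indicator of `eS i = eR i`, the share-level hypotheses say that the
reconstructed bit is `BS + BR = ∑ i, c i` and the reconstructed total is
`TS + TR = ∑ i, c i • (vS i + vR i)`. With a unique matching index `i*` these sums are `1` and
`v_{i*}^S + v_{i*}^R`, so `MUX` releases `T - r` and the masks `r` cancel in `z`; with no matching
index the bit is `0`, `MUX` releases `0`, and `z` is the mask `r` itself.
-/

open Finset

theorem Fintype.sum_ite_eq_of_unique {ι M : Type*} [Fintype ι] [AddCommMonoid M]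
    {p : ι → Prop} [DecidablePred p] (f : ι → M) {i₀ : ι} (hi₀ : p i₀)
    (huniq : ∀ i, p i → i = i₀) :
    ∑ i, (if p i then f i else 0) = f i₀ :=
  (Fintype.sum_eq_single i₀ fun i hi => if_neg fun hp => hi (huniq i hp)).trans (if_pos hi₀)

theorem eqsel_correct_general {R : Type*} [AddCommGroup R] {E : Type*} [DecidableEq E]
    {h : ℕ}
    (eS eR : Fin h → E) (vS vR : Fin h → R)
    (bS bR : Fin h → ZMod 2)
    (hb : ∀ i, bS i + bR i = if eS i = eR i then 1 else 0)
    (tS tR : Fin h → R)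
    (ht : ∀ i, tS i + tR i = if bS i + bR i = 1 then vS i + vR i else 0)
    (BS BR : ZMod 2) (hBS : BS = ∑ i, bS i) (hBR : BR = ∑ i, bR i)
    (TS TR : R) (hTS : TS = ∑ i, tS i) (hTR : TR = ∑ i, tR i)
    (rS rR mS mR : R)
    (hm : mS + mR = if BS + BR = 1 then (TS - rS) + (TR - rR) else 0)
    (zS zR : R) (hzS : zS = mS + rS) (hzR : zR = mR + rR) :
    (∀ istar : Fin h, eS istar = eR istar → (∀ i, eS i = eR i → i = istar) →
      zS + zR = vS istar + vR istar) ∧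
    ((∀ i, eS i ≠ eR i) → zS + zR = rS + rR) := by
  have ht' : ∀ i, tS i + tR i = if eS i = eR i then vS i + vR i else 0 := fun i => by
    simp only [ht, hb, one_ne_zero.ite_eq_left_iff]
  have hB : BS + BR = ∑ i, if eS i = eR i then 1 else 0 := by
    simp only [hBS, hBR, ← sum_add_distrib, hb]
  have hT : TS + TR = ∑ i, if eS i = eR i then vS i + vR i else 0 := by
    simp only [hTS, hTR, ← sum_add_distrib, ht']
  have hz : zS + zR = mS + mR + (rS + rR) := by rw [hzS, hzR]; abel
  constructor
  · intro istar hstar huniq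
    rw [Fintype.sum_ite_eq_of_unique (p := fun i => eS i = eR i) _ hstar huniq] at hB hT
    rw [hz, hm, if_pos hB, ← hT]
    abel
  · intro hnone
    simp only [hnone, if_false, sum_const_zero] at hB
    rw [hz, hm, hB, if_neg zero_ne_one, zero_add]

/-- **Correctness of the random equality-conditional selection protocol `EQSel`.**
Given secret-shared conditions `(eᵢ^S, eᵢ^R)` and payloads `(vᵢ^S, vᵢ^R)`, shares of the
equality indicators (`ssPEQT`), shares produced by the `MUX` functionality, and the
final masked outputs `z^S, z^R`: if exactly one condition `e_{i*}^S = e_{i*}^R` holds,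
then `z^S + z^R = v_{i*}^S + v_{i*}^R`; if no condition holds, then
`z^S + z^R = r^S + r^R`. -/
theorem eqsel_correct {R : Type*} [AddCommGroup R] {E : Type*} [DecidableEq E]
    {h : ℕ} (hh : 1 ≤ h)
    (eS eR : Fin h → E) (vS vR : Fin h → R)
    (bS bR : Fin h → ZMod 2)
    (hb : ∀ i, bS i + bR i = if eS i = eR i then 1 else 0)
    (tS tR : Fin h → R)
    (ht : ∀ i, tS i + tR i = if bS i + bR i = 1 then vS i + vR i else 0)
    (BS BR : ZMod 2) (hBS : BS = ∑ i, bS i) (hBR : BR = ∑ i, bR i)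
    (TS TR : R) (hTS : TS = ∑ i, tS i) (hTR : TR = ∑ i, tR i)
    (rS rR mS mR : R)
    (hm : mS + mR = if BS + BR = 1 then (TS - rS) + (TR - rR) else 0)
    (zS zR : R) (hzS : zS = mS + rS) (hzR : zR = mR + rR) :
    (∀ istar : Fin h, eS istar = eR istar → (∀ i, eS i = eR i → i = istar) →
      zS + zR = vS istar + vR istar) ∧
    ((∀ i, eS i ≠ eR i) → zS + zR = rS + rR) :=
  eqsel_correct_general eS eR vS vR bS bR hb tS tR ht BS BR hBS hBR TS TR hTS hTR rS rR mS mR hm zS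
    zR hzS hzR
end

section
/- Let δ and m be natural numbers with m ≥ 1, and let I_1, …, I_m be nonempty finite integer intervals each of cardinality 2δ + 1. Let 𝒞 be an admissible merging of (I_j)_{j ∈ [m]} with the additional property that every member C of 𝒞 equals the union of those I_j that are contained in C. Then ∑_{C ∈ 𝒞} ⌈|C| / (2δ + 1)⌉ ≤ m. -/
/-!
A merged interval `C` is covered by the intervals `I j` it contains, each of size `2δ + 1`, so
`⌈|C| / (2δ + 1)⌉` is at most the number of those `j`. Since the members of the merging are
disjoint and every `I j` is nonempty, no `j` is counted for two different members, so the
counts add up to at most `m`.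
-/

open Finset

theorem ceilDiv_card_le_card_of_subset_biUnion {ι α : Type*} [DecidableEq α]
    {I : ι → Finset α} {s : Finset ι} {C : Finset α} {k : ℕ} (hk : 0 < k)
    (hI : ∀ j ∈ s, #(I j) ≤ k) (hC : C ⊆ s.biUnion I) :
    #C ⌈/⌉ k ≤ #s := by
  rw [ceilDiv_le_iff_le_mul hk]
  calc #C ≤ #(s.biUnion I) := card_le_card hC
    _ ≤ ∑ j ∈ s, #(I j) := card_biUnion_le
    _ ≤ ∑ _j ∈ s, k := sum_le_sum hI
    _ = k * #s := by rw [sum_const, smul_eq_mul, mul_comm]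

theorem sum_card_filter_subset_le_card {ι α : Type*} [Fintype ι] [DecidableEq α]
    {I : ι → Finset α} {𝒞 : Finset (Finset α)} (hI : ∀ j, (I j).Nonempty)
    (h𝒞 : (𝒞 : Set (Finset α)).PairwiseDisjoint id) :
    ∑ C ∈ 𝒞, #{j | I j ⊆ C} ≤ Fintype.card ι := by
  have hdisj : (𝒞 : Set (Finset α)).PairwiseDisjoint fun C => ({j | I j ⊆ C} : Finset ι) := by
    intro C hC C' hC' hne
    refine disjoint_left.mpr fun j hj hj' => (hI j).ne_empty ?_
    rw [mem_filter] at hj hj'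
    exact disjoint_self.mp ((h𝒞 hC hC' hne).mono hj.2 hj'.2)
  classical
  rw [← card_biUnion hdisj]
  exact card_le_univ _

theorem sum_ceil_card_le_general {δ m : ℕ}
    (I : Fin m → Finset ℤ)
    (hI : ∀ j, IsIntIntervalFinset (I j) ∧ (I j).Nonempty ∧ (I j).card = 2 * δ + 1)
    (𝒞 : Finset (Finset ℤ))
    (h𝒞 : IsAdmissibleMerging I 𝒞)
    (hcover : ∀ C ∈ 𝒞, C = (Finset.univ.filter fun j => I j ⊆ C).biUnion I) :
    ∑ C ∈ 𝒞, C.card ⌈/⌉ (2 * δ + 1) ≤ m := by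
  calc ∑ C ∈ 𝒞, #C ⌈/⌉ (2 * δ + 1) ≤ ∑ C ∈ 𝒞, #{j | I j ⊆ C} :=
        sum_le_sum fun C hC => ceilDiv_card_le_card_of_subset_biUnion (by omega)
          (fun j _ => (hI j).2.2.le) (hcover C hC).subset
    _ ≤ Fintype.card (Fin m) := sum_card_filter_subset_le_card (fun j => (hI j).2.1) h𝒞.2.1
    _ = m := Fintype.card_fin m

/-- **Counting bound for the prefix variant of LocalMap.** If `I 1, …, I m` are
nonempty finite integer intervals of cardinality `2δ + 1` each, and `𝒞` is an
admissible merging of them in which every member equals the union of the intervals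
contained in it, then `∑_{C ∈ 𝒞} ⌈|C| / (2δ + 1)⌉ ≤ m`. -/
theorem sum_ceil_card_le {δ m : ℕ} (hm : 1 ≤ m)
    (I : Fin m → Finset ℤ)
    (hI : ∀ j, IsIntIntervalFinset (I j) ∧ (I j).Nonempty ∧ (I j).card = 2 * δ + 1)
    (𝒞 : Finset (Finset ℤ))
    (h𝒞 : IsAdmissibleMerging I 𝒞)
    (hcover : ∀ C ∈ 𝒞, C = (Finset.univ.filter fun j => I j ⊆ C).biUnion I) :
    ∑ C ∈ 𝒞, C.card ⌈/⌉ (2 * δ + 1) ≤ m :=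
  sum_ceil_card_le_general I hI 𝒞 h𝒞 hcover
end
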